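/- Let X = (X_t, t ≥ 0) be an exchangeable, dissociated combinatorial Lévy process on L_ℕ. Then there is a deterministic, continuous path t ↦ Y_t in E_L such that ‖X‖ has the same finite-dimensional distributions as Y = (Y_t, t ≥ 0). -/

import Mathlib

/-!
STATEMENT 14 (Theorem 4.20): for an exchangeable, dissociated combinatorial Lévy process
`X` on `L_ℕ`, there is a deterministic continuous path `t ↦ Y_t` in `E_L` with
`‖X‖ =_D Y`: for every `t`, almost surely `Y_t` is the combinatorial limit `‖X_t‖`
(which, the target being deterministic, is equivalent to equality of finite-dimensional
distributions of `‖X‖` and `Y`).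
-/

open MeasureTheory ProbabilityTheory Filter Topology
open scoped ENNReal NNReal
noncomputable section
namespace CLP

abbrev Struct {k : ℕ} (ar : Fin k → ℕ) (α : Type) : Type :=
  ∀ j : Fin k, (Fin (ar j) → α) → Bool

variable {k : ℕ}

def pb {ar : Fin k → ℕ} {α β : Type} (f : β → α) (M : Struct ar α) : Struct ar β :=
  fun j a => M j fun i => f (a i)

def inc {ar : Fin k → ℕ} {α : Type} (M M' : Struct ar α) : Struct ar α :=
  fun j a => xor (M j a) (M' j a)

def emptyS (ar : Fin k → ℕ) (α : Type) : Struct ar α := fun _ _ => false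

abbrev StructN (ar : Fin k → ℕ) : Type := Struct ar ℕ

def restr {ar : Fin k → ℕ} (n : ℕ) (M : StructN ar) : Struct ar (Fin n) :=
  pb (fun i : Fin n => (i : ℕ)) M

def ff (n m : ℕ) : ℕ := ∏ i ∈ Finset.range m, (n - i)

def dens {ar : Fin k → ℕ} (m n : ℕ) (A : Struct ar (Fin m)) (M : StructN ar) : ℝ :=
  ((Finset.univ.filter fun φ : Fin m ↪ Fin n =>
      pb (fun i : Fin m => ((φ i : Fin n) : ℕ)) M = A).card : ℝ) / (ff n m : ℝ)

def IsCombLimit {ar : Fin k → ℕ} (M : StructN ar) (W : Measure (StructN ar)) : Prop :=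
  ∀ (m : ℕ) (A : Struct ar (Fin m)),
    Tendsto (fun n => dens m n A M) atTop (𝓝 ((W {M' | restr m M' = A}).toReal))

def ExchMeasure {ar : Fin k → ℕ} (W : Measure (StructN ar)) : Prop :=
  ∀ σ : Equiv.Perm ℕ, W.map (pb ⇑σ) = W

def Dissociated {ar : Fin k → ℕ} (W : Measure (StructN ar)) : Prop :=
  ∀ T T' : Set ℕ, Disjoint T T' →
    IndepFun (pb ((↑) : ↥T → ℕ)) (pb ((↑) : ↥T' → ℕ)) W

abbrev EL (ar : Fin k → ℕ) : Type :=
  {W : ProbabilityMeasure (StructN ar) //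
    ExchMeasure (W : Measure (StructN ar)) ∧ Dissociated (W : Measure (StructN ar))}

structure IsCombLevy {Ω : Type} [MeasurableSpace Ω] (ar : Fin k → ℕ) (α : Type)
    (X : ℝ≥0 → Ω → Struct ar α) (P : Measure Ω) : Prop where
  measurable : ∀ t, Measurable (X t)
  init : ∀ ω, X 0 ω = emptyS ar α
  stationary : ∀ s t : ℝ≥0,
    P.map (fun ω => inc (X (t + s) ω) (X s ω)) = P.map (X t)
  indep : ∀ (r : ℕ) (ts : Fin (r + 1) → ℝ≥0), Monotone ts →
    iIndepFun
      (fun (i : Fin r) ω => inc (X (ts i.succ) ω) (X (ts i.castSucc) ω)) P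
  cadlag_right : ∀ ω t, ContinuousWithinAt (fun u => X u ω) (Set.Ici t) t
  cadlag_left : ∀ ω t, ∃ L, Tendsto (fun u => X u ω) (𝓝[<] t) (𝓝 L)

/-- exchangeability of a continuous time process on `L_ℕ`. -/
def ExchProc {Ω : Type} [MeasurableSpace Ω] {ar : Fin k → ℕ}
    (X : ℝ≥0 → Ω → StructN ar) (P : Measure Ω) : Prop :=
  ∀ (σ : Equiv.Perm ℕ) (r : ℕ) (ts : Fin r → ℝ≥0),
    P.map (fun ω (i : Fin r) => pb ⇑σ (X (ts i) ω)) =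
      P.map (fun ω (i : Fin r) => X (ts i) ω)

/-- the process `X` is dissociated: restrictions to disjoint subsets of `ℕ` are
independent (as processes, i.e. jointly at all finite collections of times). -/
def DissociatedProc {Ω : Type} [MeasurableSpace Ω] {ar : Fin k → ℕ}
    (X : ℝ≥0 → Ω → StructN ar) (P : Measure Ω) : Prop :=
  ∀ T T' : Set ℕ, Disjoint T T' →
    ∀ (r : ℕ) (ts : Fin r → ℝ≥0),
      IndepFun (fun ω (i : Fin r) => pb ((↑) : ↥T → ℕ) (X (ts i) ω))
        (fun ω (i : Fin r) => pb ((↑) : ↥T' → ℕ) (X (ts i) ω)) P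


/-! ### auxiliary material -/
section Aux
variable {ar : Fin k → ℕ}

lemma pb_pb {α β γ : Type} (f : β → α) (g : γ → β) (M : Struct ar α) :
    pb g (pb f M) = pb (f ∘ g) M := rfl

lemma measurable_pb {α β : Type} (f : β → α) :
    Measurable (pb (ar := ar) f) := by
  apply measurable_pi_lambda
  intro j
  apply measurable_pi_lambda
  intro a
  exact (measurable_pi_apply _).comp (measurable_pi_apply j)

lemma measurableSet_eq_struct {β : Type} [Countable β] (A : Struct ar β) :
    MeasurableSet {w : Struct ar β | w = A} := by
  have : {w : Struct ar β | w = A} = ⋂ j, ⋂ a, {w : Struct ar β | w j a = A j a} := by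
    ext w
    simp only [Set.mem_setOf_eq, Set.mem_iInter]
    constructor
    · rintro rfl; intro j a; rfl
    · intro h; funext j a; exact h j a
  rw [this]
  refine MeasurableSet.iInter fun j => MeasurableSet.iInter fun a => ?_
  have hm : Measurable (fun w : Struct ar β => w j a) :=
    (measurable_pi_apply a).comp (measurable_pi_apply j)
  exact hm (measurableSet_singleton (A j a))

/-- extension of an injection on an initial segment to a permutation of ℕ -/
lemma exists_perm_extend {m : ℕ} (f : Fin m → ℕ) (hf : Function.Injective f) :
    ∃ σ : Equiv.Perm ℕ, ∀ i : Fin m, σ (i : ℕ) = f i := by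
  classical
  set s : Set ℕ := Set.range (fun i : Fin m => (i : ℕ)) with hs
  set t : Set ℕ := Set.range f with ht
  have hsf : s.Finite := Set.finite_range _
  have htf : t.Finite := Set.finite_range _
  haveI : Infinite ↥sᶜ := Set.infinite_coe_iff.2 hsf.infinite_compl
  haveI : Infinite ↥tᶜ := Set.infinite_coe_iff.2 htf.infinite_compl
  letI d1 : Denumerable ↥sᶜ := Nat.Subtype.denumerable _
  letI d2 : Denumerable ↥tᶜ := Nat.Subtype.denumerable _
  let e1 : Fin m ≃ ↥s := Equiv.ofInjective _ (fun i i' h => Fin.val_injective h)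
  let e2 : Fin m ≃ ↥t := Equiv.ofInjective f hf
  let ec : ↥sᶜ ≃ ↥tᶜ := (Denumerable.eqv ↥sᶜ).trans (Denumerable.eqv ↥tᶜ).symm
  refine ⟨((Equiv.Set.sumCompl s).symm.trans
    (((e1.symm.trans e2).sumCongr ec).trans (Equiv.Set.sumCompl t))), fun i => ?_⟩
  have hi : (i : ℕ) ∈ s := ⟨i, rfl⟩
  simp only [Equiv.trans_apply]
  rw [Equiv.Set.sumCompl_symm_apply_of_mem hi]
  have h1 : (⟨(i : ℕ), hi⟩ : ↥s) = e1 i := by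
    apply Subtype.ext
    rfl
  rw [h1]
  simp only [Equiv.sumCongr_apply, Sum.map_inl, Equiv.Set.sumCompl_apply_inl,
    Equiv.trans_apply, Equiv.symm_apply_apply]
  rw [Equiv.ofInjective_apply]


end Aux

section Counting
variable {m n : ℕ}
def Meet (φ ψ : Fin m ↪ Fin n) : Prop := ∃ a b, ψ b = φ a

instance : DecidablePred fun p : (Fin m ↪ Fin n) × (Fin m ↪ Fin n) => Meet p.1 p.2 := by
  intro p; unfold Meet; infer_instance

instance (φ : Fin m ↪ Fin n) : DecidablePred (Meet φ) := by
  intro ψ; unfold Meet; infer_instance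

lemma meet_symm {φ ψ : Fin m ↪ Fin n} (h : Meet φ ψ) : Meet ψ φ := by
  obtain ⟨a, b, hab⟩ := h; exact ⟨b, a, hab.symm⟩

def restrictEmb (b : Fin m) (c : Fin n) (ψ : Fin m ↪ Fin n) (h : ψ b = c) :
    {x : Fin m // x ≠ b} ↪ {y : Fin n // y ≠ c} :=
  ⟨fun x => ⟨ψ x, fun hc => x.2 (ψ.injective (hc.trans h.symm))⟩,
   fun x x' hxx' => Subtype.ext (ψ.injective (congrArg Subtype.val hxx'))⟩

@[simp] lemma restrictEmb_apply (b : Fin m) (c : Fin n) (ψ : Fin m ↪ Fin n)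
    (h : ψ b = c) (x : {x : Fin m // x ≠ b}) :
    ((restrictEmb b c ψ h x : {y : Fin n // y ≠ c}) : Fin n) = ψ x := rfl

lemma card_pin (b : Fin m) (c : Fin n) :
    (Finset.univ.filter fun ψ : Fin m ↪ Fin n => ψ b = c).card
      ≤ (n - 1).descFactorial (m - 1) := by
  classical
  set s := Finset.univ.filter fun ψ : Fin m ↪ Fin n => ψ b = c with hs
  rcases s.eq_empty_or_nonempty with he | ⟨ψ₀, hψ₀⟩
  · simp [he]
  haveI : Nonempty ({x : Fin m // x ≠ b} ↪ {y : Fin n // y ≠ c}) :=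
    ⟨restrictEmb b c ψ₀ (by simpa [hs] using hψ₀)⟩
  have hcard : s.card ≤ (Finset.univ :
      Finset ({x : Fin m // x ≠ b} ↪ {y : Fin n // y ≠ c})).card := by
    apply Finset.card_le_card_of_injOn
      (fun ψ => if h : ψ b = c then restrictEmb b c ψ h else Classical.arbitrary _)
    · intro ψ _; exact Finset.mem_univ _
    · intro ψ hψ ψ' hψ' hee
      simp only [hs, Finset.coe_filter, Set.mem_setOf_eq] at hψ hψ'
      simp only at hee
      rw [dif_pos hψ.2, dif_pos hψ'.2] at hee
      apply DFunLike.ext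
      intro x
      by_cases hx : x = b
      · rw [hx, hψ.2, hψ'.2]
      · have h3 := congrArg (fun g => ((g ⟨x, hx⟩ : {y : Fin n // y ≠ c}) : Fin n)) hee
        simpa using h3
  calc s.card ≤ _ := hcard
    _ ≤ (n - 1).descFactorial (m - 1) := by
      rw [Finset.card_univ, Fintype.card_embedding_eq]
      have h1 : Fintype.card {x : Fin m // x ≠ b} = m - 1 := by
        simp [Fintype.card_subtype_compl, Fintype.card_subtype_eq]
      have h2 : Fintype.card {y : Fin n // y ≠ c} = n - 1 := by
        simp [Fintype.card_subtype_compl, Fintype.card_subtype_eq]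
      rw [h1, h2]

lemma card_meet (φ : Fin m ↪ Fin n) :
    (Finset.univ.filter fun ψ => Meet φ ψ).card
      ≤ m * m * (n - 1).descFactorial (m - 1) := by
  classical
  have hsub : (Finset.univ.filter fun ψ => Meet φ ψ) ⊆
      (Finset.univ : Finset (Fin m × Fin m)).biUnion
        (fun ab => Finset.univ.filter fun ψ : Fin m ↪ Fin n => ψ ab.2 = φ ab.1) := by
    intro ψ hψ
    simp only [Finset.mem_filter, Finset.mem_univ, true_and] at hψ
    obtain ⟨a, b, hab⟩ := hψ
    exact Finset.mem_biUnion.2 ⟨(a, b), Finset.mem_univ _, by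
      simp only [Finset.mem_filter, Finset.mem_univ, true_and]; exact hab⟩
  calc (Finset.univ.filter fun ψ => Meet φ ψ).card
      ≤ _ := Finset.card_le_card hsub
    _ ≤ ∑ ab : Fin m × Fin m,
        (Finset.univ.filter fun ψ : Fin m ↪ Fin n => ψ ab.2 = φ ab.1).card :=
      Finset.card_biUnion_le
    _ ≤ ∑ _ab : Fin m × Fin m, (n - 1).descFactorial (m - 1) :=
      Finset.sum_le_sum fun ab _ => card_pin ab.2 (φ ab.1)
    _ = m * m * (n - 1).descFactorial (m - 1) := by
      simp [Finset.sum_const, Finset.card_univ, mul_assoc]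

abbrev badSet (m n : ℕ) : Finset (Fin 4 → (Fin m ↪ Fin n)) :=
  Finset.univ.filter fun c => ∀ i, ∃ i', i' ≠ i ∧ Meet (c i) (c i')
lemma card_piece (j kk l : Fin 4) (hj : j ≠ 0) (hk : kk ≠ 0) (hkj : kk ≠ j) (hlk : l ≠ kk) :
    (Finset.univ.filter fun c : Fin 4 → (Fin m ↪ Fin n) =>
        Meet (c 0) (c j) ∧ Meet (c l) (c kk)).card
      ≤ (n.descFactorial m) ^ 2 * (m * m * (n - 1).descFactorial (m - 1)) ^ 2 := by
  classical
  have hex : ∀ j kk : Fin 4, j ≠ 0 → kk ≠ 0 → kk ≠ j →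
      ∃ u : Fin 4, u ≠ 0 ∧ u ≠ j ∧ u ≠ kk := by decide
  obtain ⟨u, hu0, huj, huk⟩ := hex j kk hj hk hkj
  have hcov : ∀ j kk u : Fin 4, j ≠ 0 → kk ≠ 0 → kk ≠ j → u ≠ 0 → u ≠ j → u ≠ kk →
      ∀ i : Fin 4, i = 0 ∨ i = j ∨ i = kk ∨ i = u := by decide
  have cover := hcov j kk u hj hk hkj hu0 huj huk
  set S := Finset.univ.filter fun c : Fin 4 → (Fin m ↪ Fin n) =>
      Meet (c 0) (c j) ∧ Meet (c l) (c kk) with hS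
  set K' := m * m * (n - 1).descFactorial (m - 1) with hK'
  have hfib : S.card = ∑ xy ∈ (Finset.univ : Finset ((Fin m ↪ Fin n) × (Fin m ↪ Fin n))),
      (S.filter fun c => (c 0, c u) = xy).card :=
    Finset.card_eq_sum_card_fiberwise (fun c _ => Finset.mem_univ _)
  have hfiber : ∀ xy : (Fin m ↪ Fin n) × (Fin m ↪ Fin n),
      (S.filter fun c => (c 0, c u) = xy).card ≤ K' * K' := by
    rintro ⟨x, y⟩
    have hinj : (S.filter fun c => (c 0, c u) = (x, y)).card ≤
        ((Finset.univ.filter fun z => Meet x z).sigma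
          (fun z => Finset.univ.filter fun w =>
            Meet (if l = j then z else if l = 0 then x else y) w)).card := by
      apply Finset.card_le_card_of_injOn (fun c => ⟨c j, c kk⟩)
      · intro c hc
        simp only [hS, Finset.mem_coe, Finset.mem_filter, Finset.mem_univ, true_and, Prod.mk.injEq] at hc
        obtain ⟨⟨h1, h2⟩, h3, h4⟩ := hc
        have hl : c l = if l = j then c j else if l = 0 then x else y := by
          by_cases hlj : l = j
          · rw [if_pos hlj, hlj]
          · rw [if_neg hlj]
            by_cases hl0 : l = 0
            · rw [if_pos hl0, hl0, h3]
            · rw [if_neg hl0]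
              have hlu : l = u := by
                rcases cover l with h | h | h | h
                · exact absurd h hl0
                · exact absurd h hlj
                · exact absurd h hlk
                · exact h
              rw [hlu, h4]
        refine Finset.mem_sigma.2 ⟨?_, ?_⟩
        · simp only [Finset.mem_filter, Finset.mem_univ, true_and]
          rwa [h3] at h1
        · simp only [Finset.mem_filter, Finset.mem_univ, true_and]
          rwa [hl] at h2
      · intro c hc c' hc' hcc
        simp only [hS, Finset.mem_coe, Finset.mem_filter, Finset.mem_univ, true_and,
          Prod.mk.injEq] at hc hc'
        simp only [Sigma.mk.inj_iff, heq_eq_eq] at hcc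
        funext i
        rcases cover i with rfl | rfl | rfl | rfl
        · rw [hc.2.1, hc'.2.1]
        · exact hcc.1
        · exact hcc.2
        · rw [hc.2.2, hc'.2.2]
    calc (S.filter fun c => (c 0, c u) = (x, y)).card
        ≤ _ := hinj
      _ = ∑ z ∈ Finset.univ.filter fun z => Meet x z,
            (Finset.univ.filter fun w =>
              Meet (if l = j then z else if l = 0 then x else y) w).card :=
          Finset.card_sigma _ _
      _ ≤ ∑ _z ∈ Finset.univ.filter fun z => Meet x z, K' :=
          Finset.sum_le_sum fun z _ => card_meet _
      _ = (Finset.univ.filter fun z => Meet x z).card * K' := by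
          rw [Finset.sum_const, smul_eq_mul]
      _ ≤ K' * K' := Nat.mul_le_mul_right _ (card_meet x)
  calc S.card = _ := hfib
    _ ≤ ∑ _xy ∈ (Finset.univ : Finset ((Fin m ↪ Fin n) × (Fin m ↪ Fin n))), K' * K' :=
        Finset.sum_le_sum fun xy _ => hfiber xy
    _ = Fintype.card ((Fin m ↪ Fin n) × (Fin m ↪ Fin n)) * (K' * K') := by
        rw [Finset.sum_const, smul_eq_mul, Finset.card_univ]
    _ = (n.descFactorial m) ^ 2 * K' ^ 2 := by
        rw [Fintype.card_prod, Fintype.card_embedding_eq, Fintype.card_fin, Fintype.card_fin]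
        ring
    _ = _ := by rw [hK']

lemma card_badSet :
    (badSet m n).card ≤
      64 * ((n.descFactorial m) ^ 2 * (m * m * (n - 1).descFactorial (m - 1)) ^ 2) := by
  classical
  set I : Finset (Fin 4 × Fin 4 × Fin 4) :=
    Finset.univ.filter fun p => p.1 ≠ 0 ∧ p.2.1 ≠ 0 ∧ p.2.1 ≠ p.1 ∧ p.2.2 ≠ p.2.1 with hI
  have hsub : badSet m n ⊆ I.biUnion fun p =>
      Finset.univ.filter fun c : Fin 4 → (Fin m ↪ Fin n) =>
        Meet (c 0) (c p.1) ∧ Meet (c p.2.2) (c p.2.1) := by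
    intro c hc
    simp only [badSet, Finset.mem_filter, Finset.mem_univ, true_and] at hc
    obtain ⟨j, hj0, hj⟩ := hc 0
    set kk : Fin 4 := if j = 1 then 2 else 1 with hkk
    have hkgen : ∀ j : Fin 4, j ≠ 0 →
        (if j = 1 then (2 : Fin 4) else 1) ≠ 0 ∧ (if j = 1 then (2 : Fin 4) else 1) ≠ j := by
      decide
    have hkprop : kk ≠ 0 ∧ kk ≠ j := by rw [hkk]; exact hkgen j hj0
    obtain ⟨l, hlk, hl⟩ := hc kk
    refine Finset.mem_biUnion.2 ⟨(j, kk, l), ?_, ?_⟩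
    · simp only [hI, Finset.mem_filter, Finset.mem_univ, true_and]
      exact ⟨hj0, hkprop.1, hkprop.2, hlk⟩
    · simp only [Finset.mem_filter, Finset.mem_univ, true_and]
      exact ⟨hj, meet_symm hl⟩
  calc (badSet m n).card ≤ _ := Finset.card_le_card hsub
    _ ≤ ∑ p ∈ I, (Finset.univ.filter fun c : Fin 4 → (Fin m ↪ Fin n) =>
        Meet (c 0) (c p.1) ∧ Meet (c p.2.2) (c p.2.1)).card := Finset.card_biUnion_le
    _ ≤ ∑ _p ∈ I, ((n.descFactorial m) ^ 2 * (m * m * (n - 1).descFactorial (m - 1)) ^ 2) := by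
        refine Finset.sum_le_sum fun p hp => ?_
        simp only [hI, Finset.mem_filter] at hp
        exact card_piece p.1 p.2.1 p.2.2 hp.2.1 hp.2.2.1 hp.2.2.2.1 hp.2.2.2.2
    _ ≤ 64 * _ := by
        rw [Finset.sum_const, smul_eq_mul]
        apply Nat.mul_le_mul_right
        calc I.card ≤ (Finset.univ : Finset (Fin 4 × Fin 4 × Fin 4)).card :=
              Finset.card_filter_le _ _
          _ = 64 := by simp

end Counting

section Aux2
variable {ar : Fin k → ℕ}
lemma ff_eq_descFactorial (n m : ℕ) : ff n m = n.descFactorial m :=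
  (Nat.descFactorial_eq_prod_range n m).symm

section LLN
variable {Ω : Type} [MeasurableSpace Ω] (P : Measure Ω) [IsProbabilityMeasure P]
variable (M : Ω → StructN ar)

/-- the embedding applied, as a map into ℕ -/
def emb2nat {m n : ℕ} (φ : Fin m ↪ Fin n) : Fin m → ℕ := fun i => ((φ i : Fin n) : ℕ)

lemma emb2nat_inj {m n : ℕ} (φ : Fin m ↪ Fin n) : Function.Injective (emb2nat φ) :=
  fun a b h => φ.injective (Fin.val_injective h)

lemma measurableSet_pbeq {β : Type} [Countable β] {m : ℕ} (g : Fin m → β)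
    (A : Struct ar (Fin m)) : MeasurableSet {w : Struct ar β | pb g w = A} :=
  measurable_pb g (measurableSet_eq_struct A)

variable {m : ℕ} (A : Struct ar (Fin m))

/-- the indicator variable of an injection realising `A` -/
def ZV {n : ℕ} (φ : Fin m ↪ Fin n) (ω : Ω) : ℝ :=
  if pb (emb2nat φ) (M ω) = A then 1 else 0

lemma meas_ZV (hM : Measurable M) {n : ℕ} (φ : Fin m ↪ Fin n) :
    Measurable (ZV M A φ) := by
  unfold ZV
  exact Measurable.ite (hM (measurableSet_pbeq (emb2nat φ) A)) measurable_const
    measurable_const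

lemma int_bdd {f : Ω → ℝ} (hf : Measurable f) {C : ℝ} (h : ∀ ω, |f ω| ≤ C) :
    Integrable f P :=
  (integrable_const C).mono' hf.aestronglyMeasurable (Eventually.of_forall h)

/-- expectation of `ZV` does not depend on the injection -/
lemma EZV (hM : Measurable M)
    (hexch1 : ∀ σ : Equiv.Perm ℕ, P.map (fun ω => pb ⇑σ (M ω)) = P.map M)
    {n : ℕ} (φ : Fin m ↪ Fin n) :
    ∫ ω, ZV M A φ ω ∂P = ((P.map M) {M' | restr m M' = A}).toReal := by
  have hSA : MeasurableSet {M' : StructN ar | restr m M' = A} :=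
    measurableSet_pbeq (fun i : Fin m => (i : ℕ)) A
  obtain ⟨σ, hσ⟩ := exists_perm_extend (emb2nat φ) (emb2nat_inj φ)
  have hmeasσ : Measurable (fun ω => pb ⇑σ (M ω)) := (measurable_pb _).comp hM
  have hkey : ∀ ω, pb (emb2nat φ) (M ω) = restr m (pb ⇑σ (M ω)) := by
    intro ω
    show pb (emb2nat φ) (M ω) = pb (fun i : Fin m => (i : ℕ)) (pb ⇑σ (M ω))
    rw [pb_pb]
    have hfun : (⇑σ) ∘ (fun i : Fin m => (i : ℕ)) = emb2nat φ := funext fun i => hσ i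
    rw [hfun]
  have hset : {ω | pb (emb2nat φ) (M ω) = A}
      = (fun ω => pb ⇑σ (M ω)) ⁻¹' {M' | restr m M' = A} := by
    ext ω
    simp only [Set.mem_setOf_eq, Set.mem_preimage, hkey ω]
  have hZind : ZV M A φ = Set.indicator {ω | pb (emb2nat φ) (M ω) = A} fun _ => (1:ℝ) := by
    funext ω
    simp only [ZV, Set.indicator_apply, Set.mem_setOf_eq]
  rw [hZind, integral_indicator_const, hset]
  · rw [smul_eq_mul, mul_one, measureReal_def, ← Measure.map_apply hmeasσ hSA, hexch1 σ]
  · rw [hset]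
    exact hmeasσ hSA

end LLN

section LLN2
variable {Ω : Type} [MeasurableSpace Ω] (P : Measure Ω) [IsProbabilityMeasure P]
variable (M : Ω → StructN ar) {m : ℕ} (A : Struct ar (Fin m))

lemma abs_ZV_sub {p : ℝ} (hp0 : 0 ≤ p) (hp1 : p ≤ 1) {n : ℕ} (φ : Fin m ↪ Fin n) (ω : Ω) :
    |ZV M A φ ω - p| ≤ 1 := by
  unfold ZV
  split <;> · rw [abs_le]; constructor <;> linarith

lemma prod_zero (hM : Measurable M)
    (hdiss1 : ∀ T T' : Set ℕ, Disjoint T T' →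
      IndepFun (fun ω => pb ((↑) : ↥T → ℕ) (M ω)) (fun ω => pb ((↑) : ↥T' → ℕ) (M ω)) P)
    {n : ℕ} {p : ℝ} (hp0 : 0 ≤ p) (hp1 : p ≤ 1)
    (hEZ : ∀ φ : Fin m ↪ Fin n, ∫ ω, ZV M A φ ω ∂P = p)
    (c : Fin 4 → (Fin m ↪ Fin n)) (i₀ : Fin 4)
    (hgood : ∀ i', i' ≠ i₀ → ¬ Meet (c i₀) (c i')) :
    ∫ ω, ∏ i : Fin 4, (ZV M A (c i) ω - p) ∂P = 0 := by
  classical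
  set T : Set ℕ := Set.range (emb2nat (c i₀)) with hT
  have hmemC : ∀ (i : Fin 4), i ≠ i₀ → ∀ a, emb2nat (c i) a ∈ Tᶜ := by
    intro i hi a h
    obtain ⟨a', ha'⟩ := h
    exact hgood i hi ⟨a', a, (Fin.val_injective ha').symm⟩
  set F : Struct ar ↥T → ℝ := fun w =>
    (if pb (fun a => (⟨emb2nat (c i₀) a, Set.mem_range_self a⟩ : ↥T)) w = A then 1 else 0) - p
    with hF
  set G : Struct ar ↥Tᶜ → ℝ := fun w => ∏ x ∈ (Finset.univ.erase i₀).attach,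
      ((if pb (fun a => (⟨emb2nat (c x.1) a,
          hmemC x.1 (Finset.ne_of_mem_erase x.2) a⟩ : ↥Tᶜ)) w = A then 1 else 0) - p)
    with hG
  have hFmeas : Measurable F := by
    apply Measurable.sub _ measurable_const
    exact Measurable.ite (measurableSet_pbeq _ A) measurable_const measurable_const
  have hGmeas : Measurable G := by
    apply Finset.measurable_prod
    intro x _
    apply Measurable.sub _ measurable_const
    exact Measurable.ite (measurableSet_pbeq _ A) measurable_const measurable_const
  have hFX : ∀ ω, F (pb ((↑) : ↥T → ℕ) (M ω)) = ZV M A (c i₀) ω - p := by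
    intro ω
    rw [hF]
    simp only [ZV, pb_pb]
    rfl
  have hGX : ∀ ω, G (pb ((↑) : ↥Tᶜ → ℕ) (M ω))
      = ∏ i ∈ Finset.univ.erase i₀, (ZV M A (c i) ω - p) := by
    intro ω
    rw [hG]
    rw [← Finset.prod_attach (Finset.univ.erase i₀) (fun i => (ZV M A (c i) ω - p))]
    apply Finset.prod_congr rfl
    intro x _
    simp only [ZV, pb_pb]
    rfl
  have hIndep : IndepFun (F ∘ fun ω => pb ((↑) : ↥T → ℕ) (M ω))
      (G ∘ fun ω => pb ((↑) : ↥Tᶜ → ℕ) (M ω)) P :=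
    (hdiss1 T Tᶜ disjoint_compl_right).comp hFmeas hGmeas
  have hXint : Integrable (F ∘ fun ω => pb ((↑) : ↥T → ℕ) (M ω)) P := by
    apply int_bdd P (hFmeas.comp ((measurable_pb _).comp hM))
    intro ω
    show |F (pb _ (M ω))| ≤ 1
    rw [hFX ω]
    exact abs_ZV_sub M A hp0 hp1 _ ω
  have hYint : Integrable (G ∘ fun ω => pb ((↑) : ↥Tᶜ → ℕ) (M ω)) P := by
    apply int_bdd P (hGmeas.comp ((measurable_pb _).comp hM))
    intro ω
    show |G (pb _ (M ω))| ≤ 1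
    rw [hGX ω, Finset.abs_prod]
    apply Finset.prod_le_one
    · intro i _; exact abs_nonneg _
    · intro i _; exact abs_ZV_sub M A hp0 hp1 _ ω
  have key : ∫ ω, ∏ i : Fin 4, (ZV M A (c i) ω - p) ∂P
      = ∫ ω, ((F ∘ fun ω => pb ((↑) : ↥T → ℕ) (M ω)) * (G ∘ fun ω => pb ((↑) : ↥Tᶜ → ℕ) (M ω))) ω ∂P := by
    apply integral_congr_ae
    apply Eventually.of_forall
    intro ω
    dsimp only
    rw [← Finset.mul_prod_erase Finset.univ _ (Finset.mem_univ i₀)]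
    simp only [Pi.mul_apply, Function.comp_apply]
    rw [hFX ω, hGX ω]
  rw [key, hIndep.integral_mul_eq_mul_integral hXint.aestronglyMeasurable hYint.aestronglyMeasurable]
  have : ∫ ω, (F ∘ fun ω => pb ((↑) : ↥T → ℕ) (M ω)) ω ∂P = 0 := by
    have : ∫ ω, (F ∘ fun ω => pb ((↑) : ↥T → ℕ) (M ω)) ω ∂P
        = ∫ ω, (ZV M A (c i₀) ω - p) ∂P := by
      apply integral_congr_ae
      apply Eventually.of_forall
      intro ω
      exact hFX ω
    rw [this, integral_sub _ (integrable_const p), hEZ, integral_const]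
    · simp
    · apply int_bdd (C := 1) P (meas_ZV M A hM _)
      intro ω
      unfold ZV
      split <;> norm_num
  rw [this, zero_mul]



lemma div_le_div_of_nonneg_right' {a b c : ℝ} (h : a ≤ b) (hc : 0 < c) :
    a / c ≤ b / c := by
  rw [div_le_div_iff₀ hc hc]
  exact mul_le_mul_of_nonneg_right h (le_of_lt hc)

lemma dens_eq_sum (n : ℕ) (hmn : m ≤ n) (ω : Ω) :
    dens m n A (M ω) = (∑ φ : Fin m ↪ Fin n, ZV M A φ ω) / (ff n m : ℝ) := by
  unfold dens ZV emb2nat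
  rw [Finset.sum_boole]

lemma moment_le (hM : Measurable M)
    (hexch1 : ∀ σ : Equiv.Perm ℕ, P.map (fun ω => pb ⇑σ (M ω)) = P.map M)
    (hdiss1 : ∀ T T' : Set ℕ, Disjoint T T' →
      IndepFun (fun ω => pb ((↑) : ↥T → ℕ) (M ω)) (fun ω => pb ((↑) : ↥T' → ℕ) (M ω)) P)
    (n : ℕ) (hmn : m ≤ n) :
    ∫ ω, (dens m n A (M ω) - ((P.map M) {M' | restr m M' = A}).toReal)^4 ∂P
      ≤ ((badSet m n).card : ℝ) / (ff n m : ℝ)^4 := by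
  classical
  haveI : IsProbabilityMeasure (P.map M) := Measure.isProbabilityMeasure_map hM.aemeasurable
  set p : ℝ := ((P.map M) {M' | restr m M' = A}).toReal with hpdef
  have hp0 : 0 ≤ p := ENNReal.toReal_nonneg
  have hp1 : p ≤ 1 := by
    rw [hpdef]
    have h1 := prob_le_one (μ := P.map M) (s := {M' | restr m M' = A})
    calc ((P.map M) {M' | restr m M' = A}).toReal ≤ (1 : ℝ≥0∞).toReal :=
          ENNReal.toReal_mono ENNReal.one_ne_top h1
      _ = 1 := by simp
  have hEZ : ∀ φ : Fin m ↪ Fin n, ∫ ω, ZV M A φ ω ∂P = p :=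
    fun φ => EZV P M A hM hexch1 φ
  have hK : 0 < ff n m := by
    rw [ff_eq_descFactorial]
    exact Nat.pos_of_ne_zero fun h => absurd (Nat.descFactorial_eq_zero_iff_lt.1 h) (not_lt.2 hmn)
  have hKR : (0:ℝ) < (ff n m : ℝ) := by exact_mod_cast hK
  have hcardE : (Fintype.card (Fin m ↪ Fin n)) = ff n m := by
    rw [Fintype.card_embedding_eq, Fintype.card_fin, Fintype.card_fin, ff_eq_descFactorial]
  set S : Ω → ℝ := fun ω => ∑ φ : Fin m ↪ Fin n, (ZV M A φ ω - p) with hSdef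
  have hdens : ∀ ω, dens m n A (M ω) - p = S ω / (ff n m : ℝ) := by
    intro ω
    rw [dens_eq_sum M A n hmn ω, hSdef]
    dsimp only
    rw [Finset.sum_sub_distrib, Finset.sum_const, Finset.card_univ, hcardE, sub_div]
    congr 1
    rw [nsmul_eq_mul, mul_comm, mul_div_assoc, div_self (ne_of_gt hKR), mul_one]
  have hWmeas : ∀ c : Fin 4 → (Fin m ↪ Fin n),
      Measurable (fun ω => ∏ i : Fin 4, (ZV M A (c i) ω - p)) := by
    intro c
    apply Finset.measurable_prod
    intro i _
    exact (meas_ZV M A hM (c i)).sub measurable_const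
  have hWbd : ∀ (c : Fin 4 → (Fin m ↪ Fin n)) (ω : Ω),
      |∏ i : Fin 4, (ZV M A (c i) ω - p)| ≤ 1 := by
    intro c ω
    rw [Finset.abs_prod]
    apply Finset.prod_le_one
    · intro i _; exact abs_nonneg _
    · intro i _; exact abs_ZV_sub M A hp0 hp1 _ ω
  have hWint : ∀ c : Fin 4 → (Fin m ↪ Fin n),
      Integrable (fun ω => ∏ i : Fin 4, (ZV M A (c i) ω - p)) P :=
    fun c => int_bdd P (hWmeas c) (hWbd c)
  have hS4 : ∀ ω, (S ω)^4 = ∑ c : Fin 4 → (Fin m ↪ Fin n),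
      ∏ i : Fin 4, (ZV M A (c i) ω - p) := by
    intro ω
    have h1 : (S ω)^4 = ∏ _i : Fin 4, S ω := by
      rw [Finset.prod_const, Finset.card_univ, Fintype.card_fin]
    rw [h1, hSdef]
    dsimp only
    rw [Finset.prod_univ_sum]
    rw [Fintype.piFinset_univ]
  have hint_S4 : ∫ ω, (S ω)^4 ∂P = ∑ c : Fin 4 → (Fin m ↪ Fin n),
      ∫ ω, ∏ i : Fin 4, (ZV M A (c i) ω - p) ∂P := by
    rw [← integral_finset_sum _ (fun c _ => hWint c)]
    apply integral_congr_ae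
    apply Eventually.of_forall
    intro ω
    exact hS4 ω
  have hsum_le : ∑ c : Fin 4 → (Fin m ↪ Fin n),
      ∫ ω, ∏ i : Fin 4, (ZV M A (c i) ω - p) ∂P ≤ ((badSet m n).card : ℝ) := by
    rw [← Finset.sum_filter_add_sum_filter_not Finset.univ
      (fun c : Fin 4 → (Fin m ↪ Fin n) => ∀ i, ∃ i', i' ≠ i ∧ Meet (c i) (c i'))]
    have hzero : ∑ c ∈ Finset.univ.filter (fun c : Fin 4 → (Fin m ↪ Fin n) =>
        ¬ ∀ i, ∃ i', i' ≠ i ∧ Meet (c i) (c i')),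
        ∫ ω, ∏ i : Fin 4, (ZV M A (c i) ω - p) ∂P = 0 := by
      apply Finset.sum_eq_zero
      intro c hc
      simp only [Finset.mem_filter, Finset.mem_univ, true_and] at hc
      push_neg at hc
      obtain ⟨i₀, hi₀⟩ := hc
      apply prod_zero P M A hM hdiss1 hp0 hp1 hEZ c i₀
      intro i' hi'
      exact hi₀ i' hi'
    rw [hzero, add_zero]
    calc ∑ c ∈ badSet m n, ∫ ω, ∏ i : Fin 4, (ZV M A (c i) ω - p) ∂P
        ≤ ∑ _c ∈ badSet m n, (1:ℝ) := by
          apply Finset.sum_le_sum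
          intro c _
          calc ∫ ω, ∏ i : Fin 4, (ZV M A (c i) ω - p) ∂P
              ≤ ∫ _ω, (1:ℝ) ∂P := by
                apply integral_mono (hWint c) (integrable_const 1)
                intro ω
                exact le_trans (le_abs_self _) (hWbd c ω)
            _ = 1 := by simp
      _ = ((badSet m n).card : ℝ) := by rw [Finset.sum_const, nsmul_eq_mul, mul_one]
  have heq : ∫ ω, (dens m n A (M ω) - p)^4 ∂P = (∫ ω, (S ω)^4 ∂P) / (ff n m : ℝ)^4 := by
    rw [← integral_div]
    apply integral_congr_ae
    apply Eventually.of_forall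
    intro ω
    dsimp only
    rw [hdens ω, div_pow]
  rw [heq, hint_S4]
  exact div_le_div_of_nonneg_right' hsum_le (by positivity)

lemma moment_le_final (hM : Measurable M)
    (hexch1 : ∀ σ : Equiv.Perm ℕ, P.map (fun ω => pb ⇑σ (M ω)) = P.map M)
    (hdiss1 : ∀ T T' : Set ℕ, Disjoint T T' →
      IndepFun (fun ω => pb ((↑) : ↥T → ℕ) (M ω)) (fun ω => pb ((↑) : ↥T' → ℕ) (M ω)) P)
    (n : ℕ) (hmn : m + 1 ≤ n) :
    ∫ ω, (dens m n A (M ω) - ((P.map M) {M' | restr m M' = A}).toReal)^4 ∂P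
      ≤ 64 * (m:ℝ)^4 / (n:ℝ)^2 := by
  have hm1 : m ≤ n := le_trans (Nat.le_succ m) hmn
  refine (moment_le P M A hM hexch1 hdiss1 n hm1).trans ?_
  rcases Nat.eq_zero_or_pos m with hm0 | hmpos
  · subst hm0
    have hb : (badSet 0 n).card = 0 := by
      have h := card_badSet (m := 0) (n := n)
      simpa using h
    rw [hb]
    simp
  · have hn1 : 1 ≤ n := le_trans (Nat.succ_le_succ (Nat.zero_le m)) hmn
    set D' := (n-1).descFactorial (m-1) with hD'
    have hDD : n.descFactorial m = n * D' := by
      obtain ⟨n', rfl⟩ : ∃ n', n = n' + 1 := ⟨n - 1, by omega⟩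
      obtain ⟨m', rfl⟩ : ∃ m', m = m' + 1 := ⟨m - 1, by omega⟩
      rw [Nat.succ_descFactorial_succ]
      simp [hD']
    have hD'pos : 0 < D' := Nat.pos_of_ne_zero fun h =>
      absurd (Nat.descFactorial_eq_zero_iff_lt.1 h) (by omega)
    have hffD : (ff n m : ℝ) = (n:ℝ) * (D':ℝ) := by
      rw [ff_eq_descFactorial, hDD]
      push_cast
      ring
    have hcard : ((badSet m n).card : ℝ)
        ≤ 64 * (((n:ℝ)*(D':ℝ))^2 * ((m:ℝ)*(m:ℝ)*(D':ℝ))^2) := by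
      have h := card_badSet (m := m) (n := n)
      rw [hDD] at h
      have h2 := (Nat.cast_le (α := ℝ)).2 h
      push_cast at h2
      convert h2 using 2 <;> push_cast <;> ring
    have hnR : (0:ℝ) < (n:ℝ) := by exact_mod_cast hn1
    have hD'R : (0:ℝ) < (D':ℝ) := by exact_mod_cast hD'pos
    calc ((badSet m n).card : ℝ) / (ff n m : ℝ)^4
        ≤ (64 * (((n:ℝ)*(D':ℝ))^2 * ((m:ℝ)*(m:ℝ)*(D':ℝ))^2)) / (ff n m : ℝ)^4 :=
          div_le_div_of_nonneg_right' hcard (by rw [hffD]; positivity)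
      _ = 64 * (m:ℝ)^4 / (n:ℝ)^2 := by
          rw [hffD]
          field_simp

lemma dens_nonneg (n : ℕ) (N : StructN ar) : 0 ≤ dens m n A N := by
  unfold dens
  positivity

lemma dens_le_one (n : ℕ) (N : StructN ar) : dens m n A N ≤ 1 := by
  unfold dens
  rcases Nat.eq_zero_or_pos (ff n m) with h0 | hpos
  · rw [h0]
    simp
  · rw [div_le_one (by exact_mod_cast hpos)]
    have hle : (Finset.univ.filter fun φ : Fin m ↪ Fin n =>
        pb (fun i : Fin m => ((φ i : Fin n) : ℕ)) N = A).card ≤ ff n m := by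
      calc _ ≤ (Finset.univ : Finset (Fin m ↪ Fin n)).card := Finset.card_filter_le _ _
        _ = ff n m := by
            rw [Finset.card_univ, Fintype.card_embedding_eq, Fintype.card_fin,
              Fintype.card_fin, ff_eq_descFactorial]
    exact_mod_cast hle

lemma ae_tendsto_dens (hM : Measurable M)
    (hexch1 : ∀ σ : Equiv.Perm ℕ, P.map (fun ω => pb ⇑σ (M ω)) = P.map M)
    (hdiss1 : ∀ T T' : Set ℕ, Disjoint T T' →
      IndepFun (fun ω => pb ((↑) : ↥T → ℕ) (M ω)) (fun ω => pb ((↑) : ↥T' → ℕ) (M ω)) P) :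
    ∀ᵐ ω ∂P, Tendsto (fun n => dens m n A (M ω)) atTop
      (𝓝 (((P.map M) {M' | restr m M' = A}).toReal)) := by
  classical
  haveI : IsProbabilityMeasure (P.map M) := Measure.isProbabilityMeasure_map hM.aemeasurable
  set p : ℝ := ((P.map M) {M' | restr m M' = A}).toReal with hpdef
  have hp0 : 0 ≤ p := ENNReal.toReal_nonneg
  have hp1 : p ≤ 1 := by
    rw [hpdef]
    calc ((P.map M) {M' | restr m M' = A}).toReal ≤ (1 : ℝ≥0∞).toReal :=
          ENNReal.toReal_mono ENNReal.one_ne_top prob_le_one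
      _ = 1 := by simp
  set g : ℕ → Ω → ℝ := fun n ω => (dens m (n + (m+1)) A (M ω) - p)^4 with hgdef
  have hgmeas : ∀ n, Measurable (g n) := by
    intro n
    have hd : (fun ω => dens m (n + (m+1)) A (M ω))
        = fun ω => (∑ φ : Fin m ↪ Fin (n + (m+1)), ZV M A φ ω) / (ff (n + (m+1)) m : ℝ) :=
      funext fun ω => dens_eq_sum M A _ (by omega) ω
    apply Measurable.pow_const
    apply Measurable.sub _ measurable_const
    rw [hd]
    exact (Finset.measurable_sum _ fun φ _ => meas_ZV M A hM φ).div_const _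
  have hgnn : ∀ n ω, 0 ≤ g n ω := by
    intro n ω
    rw [hgdef]
    positivity
  have hgbd : ∀ n ω, g n ω ≤ 1 := by
    intro n ω
    rw [hgdef]
    dsimp only
    have h1 : |dens m (n + (m+1)) A (M ω) - p| ≤ 1 := by
      rw [abs_le]
      have := dens_nonneg A (n + (m+1)) (M ω)
      have := dens_le_one A (n + (m+1)) (M ω)
      constructor <;> linarith
    calc (dens m (n + (m+1)) A (M ω) - p)^4
        = |dens m (n + (m+1)) A (M ω) - p|^4 := by
          rw [← abs_pow]
          rw [abs_of_nonneg (by positivity)]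
      _ ≤ 1 := pow_le_one₀ (abs_nonneg _) h1
  have hgint : ∀ n, Integrable (g n) P := by
    intro n
    apply int_bdd P (hgmeas n)
    intro ω
    rw [abs_of_nonneg (hgnn n ω)]
    exact hgbd n ω
  have hlint : ∀ n, ∫⁻ ω, ENNReal.ofReal (g n ω) ∂P
      ≤ ENNReal.ofReal (64 * (m:ℝ)^4 / ((n + (m+1) : ℕ):ℝ)^2) := by
    intro n
    rw [← ofReal_integral_eq_lintegral_ofReal (hgint n) (Eventually.of_forall (hgnn n))]
    apply ENNReal.ofReal_le_ofReal
    exact moment_le_final P M A hM hexch1 hdiss1 (n + (m+1)) (by omega)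
  have hsummable : Summable (fun n : ℕ => 64 * (m:ℝ)^4 / ((n + (m+1) : ℕ):ℝ)^2) := by
    have hbase : Summable (fun n : ℕ => 64 * (m:ℝ)^4 * (1 / (n:ℝ)^2)) := by
      apply Summable.mul_left
      exact Real.summable_one_div_nat_pow.mpr one_lt_two
    have hshift := (summable_nat_add_iff (f := fun n : ℕ => 64 * (m:ℝ)^4 * (1 / (n:ℝ)^2))
      (m+1)).2 hbase
    apply hshift.congr
    intro n
    push_cast
    ring
  have htsum : ∑' n, ∫⁻ ω, ENNReal.ofReal (g n ω) ∂P ≠ ⊤ := by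
    apply ne_top_of_le_ne_top _ (ENNReal.tsum_le_tsum hlint)
    rw [← ENNReal.ofReal_tsum_of_nonneg (fun n => by positivity) hsummable]
    exact ENNReal.ofReal_ne_top
  have haefin : ∀ᵐ ω ∂P, ∑' n, ENNReal.ofReal (g n ω) < ⊤ := by
    apply ae_lt_top (Measurable.ennreal_tsum fun n => (hgmeas n).ennreal_ofReal)
    rw [lintegral_tsum fun n => ((hgmeas n).ennreal_ofReal).aemeasurable]
    exact htsum
  filter_upwards [haefin] with ω hω
  have hg0 : Tendsto (fun n => g n ω) atTop (𝓝 0) := by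
    have h1 : Tendsto (fun n => ENNReal.ofReal (g n ω)) atTop (𝓝 0) :=
      ENNReal.tendsto_atTop_zero_of_tsum_ne_top hω.ne
    have h2 := (ENNReal.tendsto_toReal ENNReal.zero_ne_top).comp h1
    simp only [ENNReal.toReal_zero] at h2
    apply h2.congr
    intro n
    simp only [Function.comp_apply, ENNReal.toReal_ofReal (hgnn n ω)]
  have hshift : Tendsto (fun n => dens m (n + (m+1)) A (M ω)) atTop (𝓝 p) := by
    rw [Metric.tendsto_atTop]
    intro ε hε
    obtain ⟨N, hN⟩ := (Metric.tendsto_atTop).1 hg0 (ε^4) (by positivity)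
    refine ⟨N, fun n hn => ?_⟩
    have h' := hN n hn
    rw [Real.dist_eq, sub_zero, abs_of_nonneg (hgnn n ω)] at h'
    rw [Real.dist_eq]
    by_contra hcon
    push_neg at hcon
    have h4 : ε^4 ≤ |dens m (n + (m+1)) A (M ω) - p|^4 :=
      pow_le_pow_left₀ (le_of_lt hε) hcon 4
    have heq2 : g n ω = |dens m (n + (m+1)) A (M ω) - p|^4 := by
      rw [hgdef]
      dsimp only
      rw [← abs_pow, abs_of_nonneg (by positivity)]
    rw [heq2] at h'
    linarith
  exact (tendsto_add_atTop_iff_nat (m+1)).1 hshift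

end LLN2
end Aux2


section Continuity
variable {ar : Fin k → ℕ}

lemma continuous_pb {α β : Type} [TopologicalSpace α] [TopologicalSpace β]
    (f : β → α) : Continuous (pb (ar := ar) f : Struct ar α → Struct ar β) := by
  apply continuous_pi
  intro j
  apply continuous_pi
  intro a
  exact (continuous_apply _).comp (continuous_apply j)

/-- structures vanishing on tuples from `[N]` -/
def lvlE (ar : Fin k → ℕ) (N : ℕ) : Set (StructN ar) :=
  {M | restr N M = emptyS ar (Fin N)}

lemma isOpen_lvlE (N : ℕ) : IsOpen (lvlE ar N) := by
  have h : lvlE ar N = (restr (ar := ar) N) ⁻¹' {w | w = emptyS ar (Fin N)} := rfl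
  rw [h]
  exact (continuous_pb _).isOpen_preimage _ (by
    have : ({w | w = emptyS ar (Fin N)} : Set (Struct ar (Fin N))) = {emptyS ar (Fin N)} := by
      ext w; simp [Set.mem_singleton_iff]
    rw [this]
    exact isOpen_discrete _)

lemma measurableSet_lvlE (N : ℕ) : MeasurableSet (lvlE ar N) :=
  measurableSet_pbeq (fun i : Fin N => (i : ℕ)) (emptyS ar (Fin N))

lemma emptyS_mem_lvlE (N : ℕ) : emptyS ar ℕ ∈ lvlE ar N := rfl

lemma inc_eq_emptyS_iff {β : Type} (M M' : Struct ar β) :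
    inc M M' = emptyS ar β ↔ M = M' := by
  constructor
  · intro h
    funext j a
    have := congrFun (congrFun h j) a
    simp only [inc, emptyS] at this
    revert this
    cases M j a <;> cases M' j a <;> decide
  · rintro rfl
    funext j a
    simp [inc, emptyS]

lemma restr_eq_iff_inc (N : ℕ) (M M' : StructN ar) :
    restr N M = restr N M' ↔ inc M M' ∈ lvlE ar N := by
  have h : restr N (inc M M') = inc (restr N M) (restr N M') := rfl
  rw [lvlE, Set.mem_setOf_eq, h, inc_eq_emptyS_iff]

lemma measurable_inc {Ω : Type} [MeasurableSpace Ω] {F G : Ω → StructN ar}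
    (hF : Measurable F) (hG : Measurable G) :
    Measurable fun ω => inc (F ω) (G ω) := by
  apply measurable_pi_lambda
  intro j
  apply measurable_pi_lambda
  intro a
  have h1 : Measurable fun ω => (F ω j a, G ω j a) :=
    Measurable.prodMk ((measurable_pi_apply a).comp ((measurable_pi_apply j).comp hF))
      ((measurable_pi_apply a).comp ((measurable_pi_apply j).comp hG))
  exact (Measurable.of_discrete (f := fun p : Bool × Bool => xor p.1 p.2)).comp h1

lemma eventually_eq_of_tendsto_discrete {β : Type} [TopologicalSpace β] [DiscreteTopology β]
    {u : ℕ → β} {b : β} (h : Tendsto u atTop (𝓝 b)) : ∀ᶠ n in atTop, u n = b := by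
  have hmem : {b} ∈ 𝓝 b := (isOpen_discrete _).mem_nhds rfl
  exact h.eventually (eventually_of_mem hmem fun x hx => hx)

/-- uniform continuity of a bounded continuous function on the compact space `L_ℕ` -/
lemma unif_approx (f : BoundedContinuousFunction (StructN ar) ℝ) {ε : ℝ} (hε : 0 < ε) :
    ∃ N : ℕ, ∀ M M' : StructN ar, restr N M = restr N M' → |f M - f M'| ≤ ε := by
  by_contra hcon
  push_neg at hcon
  choose Ms Ms' hagree hfar using hcon
  set x : ℕ → StructN ar × StructN ar := fun N => (Ms N, Ms' N) with hx
  obtain ⟨L, -, φ, hφ, hconv⟩ :=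
    IsCompact.tendsto_subseq (x := x) isCompact_univ (fun n => Set.mem_univ _)
  have hL : L.1 = L.2 := by
    funext j a
    set N0 : ℕ := (Finset.univ.sup a) + 1 with hN0
    have haN0 : ∀ i, a i < N0 := fun i => Nat.lt_succ_of_le (Finset.le_sup (Finset.mem_univ i))
    have hc1 : Tendsto (fun kk => (x (φ kk)).1 j a) atTop (𝓝 (L.1 j a)) := by
      have hc : Continuous (fun q : StructN ar × StructN ar => q.1 j a) :=
        (continuous_apply a).comp ((continuous_apply j).comp continuous_fst)
      exact (hc.tendsto L).comp hconv
    have hc2 : Tendsto (fun kk => (x (φ kk)).2 j a) atTop (𝓝 (L.2 j a)) := by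
      have hc : Continuous (fun q : StructN ar × StructN ar => q.2 j a) :=
        (continuous_apply a).comp ((continuous_apply j).comp continuous_snd)
      exact (hc.tendsto L).comp hconv
    have hev1 := eventually_eq_of_tendsto_discrete hc1
    have hev2 := eventually_eq_of_tendsto_discrete hc2
    have hev3 : ∀ᶠ kk in atTop, ∀ i, a i < φ kk :=
      eventually_atTop.2 ⟨N0, fun kk hkk i =>
        lt_of_lt_of_le (haN0 i) (le_trans hkk hφ.le_apply)⟩
    obtain ⟨kk, h1, h2, h3⟩ := (hev1.and (hev2.and hev3)).exists
    have heval := congrFun (congrFun (hagree (φ kk)) j)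
      (fun i => (⟨a i, h3 i⟩ : Fin (φ kk)))
    simp only [restr, pb] at heval
    rw [← h1, ← h2]
    exact heval
  have hf1 : Tendsto (fun kk => f ((x (φ kk)).1)) atTop (𝓝 (f L.1)) :=
    (f.continuous.tendsto L.1).comp ((continuous_fst.tendsto L).comp hconv)
  have hf2 : Tendsto (fun kk => f ((x (φ kk)).2)) atTop (𝓝 (f L.2)) :=
    (f.continuous.tendsto L.2).comp ((continuous_snd.tendsto L).comp hconv)
  have hd : Tendsto (fun kk => |f ((x (φ kk)).1) - f ((x (φ kk)).2)|) atTop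
      (𝓝 |f L.1 - f L.2|) := (hf1.sub hf2).abs
  rw [hL, sub_self, abs_zero] at hd
  have : ε ≤ 0 := ge_of_tendsto' hd fun kk => le_of_lt (hfar (φ kk))
  linarith

variable {Ω : Type} [MeasurableSpace Ω] (P : Measure Ω) [IsProbabilityMeasure P]

lemma disagree_prob (X : ℝ≥0 → Ω → StructN ar) (hX : IsCombLevy ar ℕ X P)
    (s₁ s₂ : ℝ≥0) (N : ℕ) :
    P {ω | restr N (X s₁ ω) ≠ restr N (X s₂ ω)}
      = P ((X ((s₁ - s₂) + (s₂ - s₁))) ⁻¹' (lvlE ar N)ᶜ) := by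
  have key : ∀ a b : ℝ≥0, b ≤ a →
      P {ω | restr N (X a ω) ≠ restr N (X b ω)}
        = P ((X (a - b)) ⁻¹' (lvlE ar N)ᶜ) := by
    intro a b hba
    have hst := hX.stationary b (a - b)
    rw [tsub_add_cancel_of_le hba] at hst
    have hset : {ω | restr N (X a ω) ≠ restr N (X b ω)}
        = (fun ω => inc (X a ω) (X b ω)) ⁻¹' (lvlE ar N)ᶜ := by
      ext ω
      simp only [Set.mem_setOf_eq, Set.mem_preimage, Set.mem_compl_iff]
      exact not_congr (restr_eq_iff_inc N _ _)
    rw [hset, ← Measure.map_apply (measurable_inc (hX.measurable a) (hX.measurable b))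
      (measurableSet_lvlE N).compl, hst,
      Measure.map_apply (hX.measurable (a - b)) (measurableSet_lvlE N).compl]
  rcases le_total s₂ s₁ with h | h
  · rw [key s₁ s₂ h, tsub_eq_zero_of_le h, add_zero]
  · have hsym : {ω | restr N (X s₁ ω) ≠ restr N (X s₂ ω)}
        = {ω | restr N (X s₂ ω) ≠ restr N (X s₁ ω)} := by
      ext ω; exact ne_comm
    rw [hsym, key s₂ s₁ h, tsub_eq_zero_of_le h, zero_add]

/-- the law of `X t`, as a probability measure -/
def lawPM (X : ℝ≥0 → Ω → StructN ar) (hX : IsCombLevy ar ℕ X P) (t : ℝ≥0) :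
    ProbabilityMeasure (StructN ar) :=
  ⟨P.map (X t), Measure.isProbabilityMeasure_map (hX.measurable t).aemeasurable⟩

lemma law_cont (X : ℝ≥0 → Ω → StructN ar) (hX : IsCombLevy ar ℕ X P) :
    Continuous (lawPM P X hX) := by
  rw [continuous_iff_continuousAt]
  intro t
  apply tendsto_iff_seq_tendsto.mpr
  intro u hu
  apply ProbabilityMeasure.tendsto_iff_forall_integral_tendsto.mpr
  intro f
  show Tendsto (fun n => ∫ x, f x ∂(P.map (X (u n)))) atTop (𝓝 (∫ x, f x ∂(P.map (X t))))
  have hfm : ∀ s : ℝ≥0, Integrable (fun ω => f (X s ω)) P := fun s =>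
    int_bdd P (f.continuous.measurable.comp (hX.measurable s))
      (fun ω => by rw [← Real.norm_eq_abs]; exact f.norm_coe_le_norm _)
  have hint : ∀ s : ℝ≥0, ∫ x, f x ∂(P.map (X s)) = ∫ ω, f (X s ω) ∂P := fun s =>
    integral_map (hX.measurable s).aemeasurable f.continuous.measurable.aestronglyMeasurable
  simp only [hint]
  -- the symmetric difference parameter
  set d : ℕ → ℝ≥0 := fun n => (u n - t) + (t - u n) with hd
  have hd0 : Tendsto d atTop (𝓝 0) := by
    have h1 : Tendsto (fun n => u n - t) atTop (𝓝 (t - t)) :=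
      Tendsto.sub hu tendsto_const_nhds
    have h2 : Tendsto (fun n => t - u n) atTop (𝓝 (t - t)) :=
      Tendsto.sub tendsto_const_nhds hu
    simpa using h1.add h2
  rw [Metric.tendsto_atTop]
  intro ε hε
  obtain ⟨N, hN⟩ := unif_approx f (show (0:ℝ) < ε/4 by linarith)
  set Bset : ℕ → Set Ω := fun n => {ω | restr N (X (u n) ω) ≠ restr N (X t ω)} with hBset
  have hBeq : ∀ n, Bset n = (fun ω => inc (X (u n) ω) (X t ω)) ⁻¹' (lvlE ar N)ᶜ := by
    intro n
    ext ω
    simp only [hBset, Set.mem_setOf_eq, Set.mem_preimage, Set.mem_compl_iff]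
    exact not_congr (restr_eq_iff_inc N _ _)
  have hBmeas : ∀ n, MeasurableSet (Bset n) := fun n => by
    rw [hBeq n]
    exact (measurable_inc (hX.measurable _) (hX.measurable _)) (measurableSet_lvlE N).compl
  have hBprob : ∀ n, P (Bset n) = P ((X (d n)) ⁻¹' (lvlE ar N)ᶜ) := fun n =>
    disagree_prob P X hX (u n) t N
  -- the probability of disagreement tends to zero
  have hδ : Tendsto (fun n => (P (Bset n)).toReal) atTop (𝓝 0) := by
    have hmset : ∀ n, MeasurableSet ((X (d n)) ⁻¹' (lvlE ar N)ᶜ) := fun n =>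
      (hX.measurable _) (measurableSet_lvlE N).compl
    have hIeq : ∀ n, ∫ ω, Set.indicator ((X (d n)) ⁻¹' (lvlE ar N)ᶜ) (fun _ => (1:ℝ)) ω ∂P
        = (P ((X (d n)) ⁻¹' (lvlE ar N)ᶜ)).toReal := by
      intro n
      rw [integral_indicator_const (1:ℝ) (hmset n), smul_eq_mul, mul_one, measureReal_def]
    have hpt : ∀ ω, Tendsto
        (fun n => Set.indicator ((X (d n)) ⁻¹' (lvlE ar N)ᶜ) (fun _ => (1:ℝ)) ω) atTop (𝓝 0) := by
      intro ω
      have hcw := hX.cadlag_right ω 0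
      have hdw : Tendsto d atTop (𝓝[Set.Ici 0] (0:ℝ≥0)) := by
        rw [tendsto_nhdsWithin_iff]
        exact ⟨hd0, Eventually.of_forall fun n => Set.mem_Ici.2 zero_le⟩
      have hcw' : Tendsto (fun v => X v ω) (𝓝[Set.Ici 0] 0) (𝓝 (X 0 ω)) := hcw
      have hXd : Tendsto (fun n => X (d n) ω) atTop (𝓝 (X 0 ω)) := hcw'.comp hdw
      rw [hX.init ω] at hXd
      have hevmem : ∀ᶠ n in atTop, X (d n) ω ∈ lvlE ar N :=
        hXd.eventually (eventually_of_mem ((isOpen_lvlE N).mem_nhds (emptyS_mem_lvlE N))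
          fun y hy => hy)
      apply Tendsto.congr' _ tendsto_const_nhds
      filter_upwards [hevmem] with n hn
      rw [Set.indicator_of_notMem]
      simp only [Set.mem_preimage, Set.mem_compl_iff, not_not]
      exact hn
    have hDCT := tendsto_integral_of_dominated_convergence (μ := P)
      (F := fun n ω => Set.indicator ((X (d n)) ⁻¹' (lvlE ar N)ᶜ) (fun _ => (1:ℝ)) ω)
      (f := fun _ => (0:ℝ)) (bound := fun _ => (1:ℝ))
      (fun n => ((measurable_const.indicator (hmset n)).aestronglyMeasurable))
      (integrable_const 1)
      (fun n => Eventually.of_forall fun ω => by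
        simp only [Real.norm_eq_abs]
        by_cases hmem : ω ∈ X (d n) ⁻¹' (lvlE ar N)ᶜ
        · rw [Set.indicator_of_mem hmem]; norm_num
        · rw [Set.indicator_of_notMem hmem]; norm_num)
      (Eventually.of_forall hpt)
    have h0 : (∫ _ω, (0:ℝ) ∂P) = 0 := integral_zero _ _
    rw [h0] at hDCT
    apply hDCT.congr
    intro n
    rw [hIeq n, ← hBprob n]
  -- key estimate
  have hkey : ∀ n, dist (∫ ω, f (X (u n) ω) ∂P) (∫ ω, f (X t ω) ∂P)
      ≤ ε/4 + (2*‖f‖+1) * (P (Bset n)).toReal := by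
    intro n
    have hIind : Integrable (fun ω => (2*‖f‖+1) * Set.indicator (Bset n) (fun _ => (1:ℝ)) ω) P :=
      ((integrable_const (1:ℝ)).indicator (hBmeas n)).const_mul _
    rw [Real.dist_eq, ← integral_sub (hfm (u n)) (hfm t)]
    have habs : |∫ ω, (f (X (u n) ω) - f (X t ω)) ∂P|
        ≤ ∫ ω, |f (X (u n) ω) - f (X t ω)| ∂P := by
      have := norm_integral_le_integral_norm (μ := P) (fun ω => f (X (u n) ω) - f (X t ω))
      simpa [Real.norm_eq_abs] using this
    refine habs.trans ?_
    have hptb : ∀ ω, |f (X (u n) ω) - f (X t ω)|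
        ≤ ε/4 + (2*‖f‖+1) * Set.indicator (Bset n) (fun _ => (1:ℝ)) ω := by
      intro ω
      by_cases hω : ω ∈ Bset n
      · rw [Set.indicator_of_mem hω, mul_one]
        have h1 : |f (X (u n) ω)| ≤ ‖f‖ := by
          rw [← Real.norm_eq_abs]; exact f.norm_coe_le_norm _
        have h2 : |f (X t ω)| ≤ ‖f‖ := by
          rw [← Real.norm_eq_abs]; exact f.norm_coe_le_norm _
        have h3 := abs_add_le (f (X (u n) ω)) (-(f (X t ω)))
        rw [abs_neg] at h3
        rw [sub_eq_add_neg]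
        linarith
      · rw [Set.indicator_of_notMem hω, mul_zero, add_zero]
        have heqr : restr N (X (u n) ω) = restr N (X t ω) := not_not.1 hω
        exact hN _ _ heqr
    calc ∫ ω, |f (X (u n) ω) - f (X t ω)| ∂P
        ≤ ∫ ω, (ε/4 + (2*‖f‖+1) * Set.indicator (Bset n) (fun _ => (1:ℝ)) ω) ∂P := by
          apply integral_mono (((hfm (u n)).sub (hfm t)).abs) _ hptb
          exact (integrable_const _).add hIind
      _ = ε/4 + (2*‖f‖+1) * (P (Bset n)).toReal := by
          rw [integral_add (integrable_const _) hIind, integral_const, integral_const_mul,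
            integral_indicator_const (1:ℝ) (hBmeas n)]
          simp [measure_univ, measureReal_def]
  have hlim : Tendsto (fun n => ε/4 + (2*‖f‖+1) * (P (Bset n)).toReal) atTop
      (𝓝 (ε/4 + (2*‖f‖+1) * 0)) :=
    tendsto_const_nhds.add (hδ.const_mul _)
  rw [mul_zero, add_zero] at hlim
  have hev := (tendsto_order.1 hlim).2 (ε/2) (by linarith)
  obtain ⟨N₁, hN₁⟩ := eventually_atTop.1 hev
  exact ⟨N₁, fun n hn => lt_of_le_of_lt (hkey n) (lt_of_lt_of_le (hN₁ n hn) (by linarith))⟩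

end Continuity


/-- **Theorem 4.20.** -/
theorem dissociated_projection_deterministic
    (ar : Fin (k + 1) → ℕ) (har : Monotone ar) (hik : 1 ≤ ar (Fin.last k))
    {Ω : Type} [MeasurableSpace Ω] (P : Measure Ω) [IsProbabilityMeasure P]
    (X : ℝ≥0 → Ω → StructN ar) (hX : IsCombLevy ar ℕ X P) (hexch : ExchProc X P)
    (hdiss : DissociatedProc X P) :
    ∃ Y : ℝ≥0 → EL ar, Continuous Y ∧
      ∀ t : ℝ≥0, ∀ᵐ ω ∂P, IsCombLimit (X t ω) ((Y t).1 : Measure (StructN ar)) := by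
  classical
  have hexch1 : ∀ (t : ℝ≥0) (σ : Equiv.Perm ℕ),
      P.map (fun ω => pb ⇑σ (X t ω)) = P.map (X t) := by
    intro t σ
    have h := hexch σ 1 (fun _ => t)
    have hm1 : Measurable (fun ω (_i : Fin 1) => pb ⇑σ (X t ω)) :=
      measurable_pi_lambda _ fun _ => (measurable_pb _).comp (hX.measurable t)
    have hm2 : Measurable (fun ω (_i : Fin 1) => X t ω) :=
      measurable_pi_lambda _ fun _ => hX.measurable t
    have happ := congrArg (Measure.map (fun g : Fin 1 → StructN ar => g 0)) h
    rw [Measure.map_map (measurable_pi_apply 0) hm1,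
      Measure.map_map (measurable_pi_apply 0) hm2] at happ
    exact happ
  have hdiss1 : ∀ (t : ℝ≥0) (T T' : Set ℕ), Disjoint T T' →
      IndepFun (fun ω => pb ((↑) : ↥T → ℕ) (X t ω))
        (fun ω => pb ((↑) : ↥T' → ℕ) (X t ω)) P := by
    intro t T T' hTT'
    have h := (hdiss T T' hTT' 1 (fun _ => t)).comp
      (measurable_pi_apply (0 : Fin 1)) (measurable_pi_apply (0 : Fin 1))
    exact h
  have hexchM : ∀ t : ℝ≥0,
      ExchMeasure ((lawPM P X hX t : ProbabilityMeasure (StructN ar)) :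
        Measure (StructN ar)) := by
    intro t σ
    show (P.map (X t)).map (pb ⇑σ) = P.map (X t)
    rw [Measure.map_map (measurable_pb _) (hX.measurable t)]
    exact hexch1 t σ
  have hdissM : ∀ t : ℝ≥0,
      Dissociated ((lawPM P X hX t : ProbabilityMeasure (StructN ar)) :
        Measure (StructN ar)) := by
    intro t T T' hTT'
    rw [indepFun_iff_measure_inter_preimage_eq_mul]
    intro S S' hS hS'
    have h1 := (indepFun_iff_measure_inter_preimage_eq_mul.1 (hdiss1 t T T' hTT')) S S' hS hS'
    show (P.map (X t)) _ = (P.map (X t)) _ * (P.map (X t)) _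
    rw [Measure.map_apply (hX.measurable t) ((measurable_pb _) hS),
      Measure.map_apply (hX.measurable t) ((measurable_pb _) hS'),
      Measure.map_apply (hX.measurable t) (((measurable_pb _) hS).inter ((measurable_pb _) hS'))]
    exact h1
  refine ⟨fun t => ⟨lawPM P X hX t, hexchM t, hdissM t⟩, ?_, ?_⟩
  · exact Continuous.subtype_mk (law_cont P X hX) _
  · intro t
    have hae : ∀ᵐ ω ∂P, ∀ (m : ℕ) (A : Struct ar (Fin m)),
        Tendsto (fun n => dens m n A (X t ω)) atTop
          (𝓝 (((P.map (X t)) {M' | restr m M' = A}).toReal)) :=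
      ae_all_iff.2 fun m => ae_all_iff.2 fun A =>
        ae_tendsto_dens P (X t) A (hX.measurable t) (hexch1 t) (hdiss1 t)
    filter_upwards [hae] with ω hω
    intro m A
    exact hω m A

end CLP
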